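/- Let u be a nonconstant inner function and let φ ∈ L∞(𝕋) satisfy |φ| = 1 a.e. on 𝕋. Then m(D_φ) = √(1 − ‖B_{φ̄}‖²), where φ̄ denotes the complex conjugate of φ. -/

import Mathlib

open MeasureTheory Complex
open scoped InnerProductSpace ENNReal

noncomputable section

namespace DTTO

instance fact2pi : Fact (0 < 2 * Real.pi) := ⟨by positivity⟩

/-- The circle, realized as `ℝ / 2πℤ`. -/
abbrev 𝕋c := AddCircle (2 * Real.pi)

/-- Normalized Haar (Lebesgue) measure on the circle. -/
abbrev μT : Measure 𝕋c := AddCircle.haarAddCircle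

/-- `L²(𝕋)`. -/
abbrev L2 := Lp ℂ 2 μT

/-- `L∞(𝕋)`. -/
abbrev Linf := Lp ℂ ⊤ μT

lemma memL2_smul (φ : Linf) (f : L2) : MemLp (⇑φ • ⇑f) 2 μT :=
  (Lp.memLp f).smul (Lp.memLp φ)

/-- Multiplication operator `M_φ : L² → L²` by a function `φ ∈ L∞`. -/
def Mmul (φ : Linf) : L2 →L[ℂ] L2 :=
  LinearMap.mkContinuous
    { toFun := fun f => (memL2_smul φ f).toLp _
      map_add' := fun f g => by
        refine Lp.ext ?_
        filter_upwards [MemLp.coeFn_toLp (memL2_smul φ (f + g)),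
          MemLp.coeFn_toLp (memL2_smul φ f), MemLp.coeFn_toLp (memL2_smul φ g),
          Lp.coeFn_add f g,
          Lp.coeFn_add ((memL2_smul φ f).toLp _) ((memL2_smul φ g).toLp _)] with
            x h1 h2 h3 h4 h5
        rw [h1, h5]
        simp only [Pi.add_apply, h2, h3]
        simp only [Pi.smul_apply', h4, Pi.add_apply, smul_add]
      map_smul' := fun c f => by
        refine Lp.ext ?_
        filter_upwards [MemLp.coeFn_toLp (memL2_smul φ (c • f)),
          MemLp.coeFn_toLp (memL2_smul φ f),
          Lp.coeFn_smul c f,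
          Lp.coeFn_smul c ((memL2_smul φ f).toLp _)] with x h1 h2 h3 h4
        rw [h1, RingHom.id_apply, h4]
        simp only [Pi.smul_apply, Pi.smul_apply', h2, h3]
        exact smul_comm _ _ _ }
    ‖φ‖ (fun f => by
      simp only [LinearMap.coe_mk, AddHom.coe_mk]
      rw [Lp.norm_toLp, Lp.norm_def, Lp.norm_def]
      rw [← ENNReal.toReal_mul]
      refine ENNReal.toReal_mono ?_ ?_
      · exact ENNReal.mul_ne_top (Lp.eLpNorm_ne_top φ) (Lp.eLpNorm_ne_top f)
      · exact eLpNorm_smul_le_eLpNorm_top_mul_eLpNorm 2 (Lp.aestronglyMeasurable f) ⇑φ)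

/-- The canonical inclusion `L∞ ⊆ L²` (the measure is finite). -/
def toL2 (φ : Linf) : L2 := ((Lp.memLp φ).mono_exponent le_top).toLp _

/-- The Hardy space `H²`, the closed linear span in `L²` of the exponentials `e_n`, `n ≥ 0`. -/
def H2 : Submodule ℂ L2 :=
  (Submodule.span ℂ (Set.range fun n : ℕ => (fourierLp 2 (n : ℤ) : L2))).topologicalClosure

instance : CompleteSpace H2 := (Submodule.isClosed_topologicalClosure _).completeSpace_coe

/-- `H²₋ = L² ⊖ H²`. -/
def Hminus : Submodule ℂ L2 := H2ᗮ

instance : CompleteSpace Hminus := (Submodule.isClosed_orthogonal _).completeSpace_coe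

/-- `H∞ = H² ∩ L∞`. -/
def MemHinf (φ : Linf) : Prop := toL2 φ ∈ H2

/-- An inner function: an element of `H² ∩ L∞` of modulus one a.e. -/
structure IsInnerFn (u : Linf) : Prop where
  memH2 : MemHinf u
  unimod : ∀ᵐ z ∂μT, ‖u z‖ = 1

/-- `u` is nonconstant (not a.e. equal to a constant). -/
def Nonconst (u : Linf) : Prop := ¬ ∃ c : ℂ, (⇑u : 𝕋c → ℂ) =ᵐ[μT] fun _ => c

/-- The subspace `uH²` of `L²`. -/
def uH2 (u : Linf) : Submodule ℂ L2 := H2.map (Mmul u).toLinearMap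

/-- The model space `K_u = H² ⊖ uH² = H² ∩ (uH²)ᗮ`. -/
def Ku (u : Linf) : Submodule ℂ L2 := H2 ⊓ (uH2 u)ᗮ

lemma isClosed_Ku (u : Linf) : IsClosed ((Ku u : Set L2)) := by
  have h : (Ku u : Set L2) = (H2 : Set L2) ∩ ((uH2 u)ᗮ : Set L2) := rfl
  rw [h]
  exact (Submodule.isClosed_topologicalClosure _).inter (Submodule.isClosed_orthogonal _)

instance (u : Linf) : CompleteSpace (Ku u) := (isClosed_Ku u).completeSpace_coe

/-- `K_u^⊥ = L² ⊖ K_u`. -/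
def KuP (u : Linf) : Submodule ℂ L2 := (Ku u)ᗮ

instance (u : Linf) : CompleteSpace (KuP u) := (Submodule.isClosed_orthogonal _).completeSpace_coe

/-- Dual truncated Toeplitz operator `D_φ` on `K_u^⊥`. -/
def Dop (u φ : Linf) : KuP u →L[ℂ] KuP u :=
  Submodule.orthogonalProjectionOnto (KuP u) ∘L Mmul φ ∘L (KuP u).subtypeL

/-- Truncated Toeplitz operator `A_φ` on `K_u`. -/
def Aop (u φ : Linf) : Ku u →L[ℂ] Ku u :=
  Submodule.orthogonalProjectionOnto (Ku u) ∘L Mmul φ ∘L (Ku u).subtypeL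

/-- The operator `B_φ : K_u → K_u^⊥`, `B_φ f = (I - P_{K_u})(φ f)`. -/
def Bop (u φ : Linf) : Ku u →L[ℂ] KuP u :=
  Submodule.orthogonalProjectionOnto (KuP u) ∘L Mmul φ ∘L (Ku u).subtypeL

/-- Toeplitz operator `T_φ : H² → H²`. -/
def Top (φ : Linf) : H2 →L[ℂ] H2 :=
  Submodule.orthogonalProjectionOnto H2 ∘L Mmul φ ∘L H2.subtypeL

/-- Hankel operator `H_φ : H² → H²₋`. -/
def Hop (φ : Linf) : H2 →L[ℂ] Hminus :=
  Submodule.orthogonalProjectionOnto Hminus ∘L Mmul φ ∘L H2.subtypeL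

/-- The exponential `e₁(ζ) = ζ` as an element of `L∞`. -/
def e1 : Linf := fourierLp ⊤ 1

/-- The exponential `e₋₁(ζ) = ζ̄` as an element of `L∞`. -/
def eneg1 : Linf := fourierLp ⊤ (-1)

/-- The operator `Q : H²₋ → H²₋`, `Q g = P₋(e₁ g)`. -/
def Qop : Hminus →L[ℂ] Hminus :=
  Submodule.orthogonalProjectionOnto Hminus ∘L Mmul e1 ∘L Hminus.subtypeL

/-- `u(0)`, the 0-th Fourier coefficient. -/
def coef0 (u : Linf) : ℂ := fourierCoeff (⇑u) 0

/-- Minimum modulus of a bounded operator. -/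
def minMod {E F : Type*} [NormedAddCommGroup E] [NormedSpace ℂ E]
    [NormedAddCommGroup F] [NormedSpace ℂ F] (T : E →L[ℂ] F) : ℝ :=
  ⨅ x : {x : E // ‖x‖ = 1}, ‖T x.1‖

/-- Complex conjugation on `L∞`. -/
lemma memLinf_star (φ : Linf) : MemLp (fun z => (starRingEnd ℂ) (φ z)) ⊤ μT := by
  refine ⟨continuous_star.comp_aestronglyMeasurable (Lp.aestronglyMeasurable φ), ?_⟩
  rw [eLpNorm_congr_norm_ae (g := ⇑φ) (Filter.Eventually.of_forall fun z => norm_star _)]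
  exact Lp.eLpNorm_lt_top φ

/-- The complex conjugate `φ̄ ∈ L∞` of `φ ∈ L∞`. -/
def conjL (φ : Linf) : Linf := (memLinf_star φ).toLp _

lemma memLinf_mul (φ ψ : Linf) : MemLp (⇑φ • ⇑ψ) ⊤ μT :=
  (Lp.memLp ψ).smul (Lp.memLp φ)

/-- The pointwise product of two elements of `L∞`. -/
def mulL (φ ψ : Linf) : Linf := (memLinf_mul φ ψ).toLp _

end DTTO

namespace DTTO

lemma inner_fourierLp_eq_zero {m n : ℤ} (h : m ≠ n) :
    (inner ℂ (fourierLp 2 m : L2) (fourierLp 2 n : L2) : ℂ) = 0 := by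
  have hcoe := congrFun (coe_fourierBasis (T := 2 * Real.pi))
  have h2 := (fourierBasis (T := 2 * Real.pi)).orthonormal.2 (i := m) (j := n) h
  simpa only [hcoe] using h2

lemma span_le_orth_em1 :
    Submodule.span ℂ (Set.range fun n : ℕ => (fourierLp 2 (n : ℤ) : L2))
      ≤ (ℂ ∙ (fourierLp 2 (-1) : L2))ᗮ := by
  rw [Submodule.span_le]
  rintro x ⟨n, rfl⟩
  rw [SetLike.mem_coe, Submodule.mem_orthogonal]
  intro w hw
  obtain ⟨c, rfl⟩ := Submodule.mem_span_singleton.1 hw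
  rw [inner_smul_left, inner_fourierLp_eq_zero (by omega : (-1 : ℤ) ≠ (n : ℤ)), mul_zero]

lemma H2_le_orth_em1 : H2 ≤ (ℂ ∙ (fourierLp 2 (-1) : L2))ᗮ :=
  Submodule.topologicalClosure_minimal _ span_le_orth_em1 (Submodule.isClosed_orthogonal _)

/-- `e₋₁ ∈ H²₋`. -/
lemma em1_mem : (fourierLp 2 (-1) : L2) ∈ Hminus := by
  unfold Hminus
  rw [Submodule.mem_orthogonal]
  intro v hv
  have h := H2_le_orth_em1 hv
  rw [Submodule.mem_orthogonal] at h
  exact inner_eq_zero_symm.mp (h _ (Submodule.mem_span_singleton_self _))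

/-- `e₋₁` as an element of `H²₋`. -/
def em1 : Hminus := ⟨(fourierLp 2 (-1) : L2), em1_mem⟩

/-- For `f ∈ K_u`, the function `u f ∈ uH² ⊆ K_u^⊥`. -/
lemma mul_mem_KuP (u : Linf) (f : Ku u) : Mmul u (f : L2) ∈ KuP u := by
  unfold KuP
  rw [Submodule.mem_orthogonal]
  intro v hv
  have hv2 : v ∈ (uH2 u)ᗮ := (Submodule.mem_inf.1 hv).2
  have hm : Mmul u (f : L2) ∈ uH2 u :=
    Submodule.mem_map_of_mem (Submodule.mem_inf.1 f.2).1
  rw [Submodule.mem_orthogonal] at hv2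
  exact inner_eq_zero_symm.mp (hv2 _ hm)

lemma Ku_le_H2 (u : Linf) : Ku u ≤ H2 := inf_le_left

/-- The inclusion `K_u ⊆ H²` as a continuous linear map. -/
def KuIncl (u : Linf) : Ku u →L[ℂ] H2 :=
  LinearMap.mkContinuous (Submodule.inclusion (Ku_le_H2 u)) 1
    (fun f => by rw [one_mul]; exact le_of_eq rfl)

end DTTO


/-!
For unimodular `φ`, multiplication by `φ` is an isometry of `L²`, so Pythagoras for the splitting
`L² = K_u ⊕ K_u^⊥` gives `‖D_φ f‖² = ‖f‖² - ‖P_{K_u}(φ f)‖²` for `f ∈ K_u^⊥`. The compression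
`f ↦ P_{K_u}(φ f)` is the adjoint of `B_{φ̄}`, hence has norm `‖B_{φ̄}‖`, and minimizing over the unit
sphere of `K_u^⊥` (nonempty, as `e₋₁ ∈ H²₋ ⊆ K_u^⊥`) gives the formula.
-/

open scoped InnerProduct

namespace DTTO

theorem minMod_eq_sqrt_one_sub_norm_sq {E F G : Type*} [NormedAddCommGroup E] [NormedSpace ℂ E]
    [Nontrivial E] [NormedAddCommGroup F] [NormedSpace ℂ F] [NormedAddCommGroup G]
    [NormedSpace ℂ G] (C : E →L[ℂ] F) (D : E →L[ℂ] G)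
    (h : ∀ x, ‖D x‖ ^ 2 + ‖C x‖ ^ 2 = ‖x‖ ^ 2) :
    minMod D = √(1 - ‖C‖ ^ 2) := by
  obtain ⟨x₀, hx₀⟩ := exists_norm_eq E zero_le_one
  have : Nonempty {x : E // ‖x‖ = 1} := ⟨⟨x₀, hx₀⟩⟩
  have hunit (x : {x : E // ‖x‖ = 1}) : ‖D x.1‖ ^ 2 + ‖C x.1‖ ^ 2 = 1 := by
    rw [h, x.2, one_pow]
  have hC (x : {x : E // ‖x‖ = 1}) : ‖C x.1‖ ≤ ‖C‖ := by
    simpa only [x.2, mul_one] using C.le_opNorm x.1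
  refine le_antisymm ?_ (le_ciInf fun x => ?_)
  · set m := minMod D
    have hm0 : 0 ≤ m := Real.iInf_nonneg fun _ => norm_nonneg _
    have hmD : ∀ x, m ≤ ‖D (x : {x : E // ‖x‖ = 1})‖ :=
      ciInf_le ⟨0, by rintro _ ⟨x, rfl⟩; exact norm_nonneg _⟩
    have hm1 : m ^ 2 ≤ 1 := by
      nlinarith [hmD ⟨x₀, hx₀⟩, hunit ⟨x₀, hx₀⟩, norm_nonneg (C x₀)]
    have hCm : ‖C‖ ≤ √(1 - m ^ 2) :=
      C.opNorm_le_of_unit_norm (Real.sqrt_nonneg _) fun x hx =>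
        Real.le_sqrt_of_sq_le (by nlinarith [hmD ⟨x, hx⟩, hunit ⟨x, hx⟩])
    have hCm_sq : ‖C‖ ^ 2 ≤ 1 - m ^ 2 := by
      simpa only [Real.sq_sqrt (sub_nonneg.2 hm1)] using pow_le_pow_left₀ (norm_nonneg C) hCm 2
    exact Real.le_sqrt_of_sq_le (by linarith)
  · rw [← Real.sqrt_sq (norm_nonneg (D x.1))]
    exact Real.sqrt_le_sqrt (by nlinarith [hunit x, hC x, norm_nonneg (C x.1)])

lemma coeFn_Mmul (φ : Linf) (f : L2) : ⇑(Mmul φ f) =ᵐ[μT] ⇑φ • ⇑f :=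
  MemLp.coeFn_toLp (memL2_smul φ f)

lemma coeFn_conjL (φ : Linf) : ⇑(conjL φ) =ᵐ[μT] fun z => (starRingEnd ℂ) (φ z) :=
  MemLp.coeFn_toLp (memLinf_star φ)

lemma norm_Mmul_apply {φ : Linf} (hφ : ∀ᵐ z ∂μT, ‖φ z‖ = 1) (f : L2) : ‖Mmul φ f‖ = ‖f‖ := by
  rw [Lp.norm_def, Lp.norm_def, eLpNorm_congr_ae (coeFn_Mmul φ f)]
  congr 1
  refine eLpNorm_congr_norm_ae ?_
  filter_upwards [hφ] with z hz
  simp only [Pi.smul_apply', smul_eq_mul, norm_mul, hz, one_mul]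

lemma Mmul_eq_adjoint_Mmul_conjL (φ : Linf) : Mmul φ = (Mmul (conjL φ))† := by
  refine (ContinuousLinearMap.eq_adjoint_iff _ _).2 fun f g => ?_
  rw [L2.inner_def, L2.inner_def]
  refine integral_congr_ae ?_
  filter_upwards [coeFn_Mmul φ f, coeFn_Mmul (conjL φ) g, coeFn_conjL φ] with z hf hg hφ
  simp only [hf, hg, hφ, Pi.smul_apply', smul_eq_mul, RCLike.inner_apply, map_mul]
  ring

lemma adjoint_Bop_conjL (u φ : Linf) :
    (Bop u (conjL φ))† = (Ku u).orthogonalProjectionOnto ∘L Mmul φ ∘L (KuP u).subtypeL := by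
  simp only [Bop, ContinuousLinearMap.adjoint_comp, Submodule.adjoint_subtypeL,
    Submodule.adjoint_orthogonalProjectionOnto, ← Mmul_eq_adjoint_Mmul_conjL,
    ContinuousLinearMap.comp_assoc]

lemma norm_sq_Dop_add_norm_sq_adjoint_Bop_conjL {u φ : Linf} (hφ : ∀ᵐ z ∂μT, ‖φ z‖ = 1)
    (f : KuP u) : ‖Dop u φ f‖ ^ 2 + ‖((Bop u (conjL φ))†) f‖ ^ 2 = ‖f‖ ^ 2 := by
  have h := (Ku u).norm_sq_eq_add_norm_sq_projection (Mmul φ f)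
  rw [norm_Mmul_apply hφ, add_comm] at h
  rw [adjoint_Bop_conjL]
  exact h.symm

lemma Hminus_le_KuP (u : Linf) : Hminus ≤ KuP u :=
  Submodule.orthogonal_le (Ku_le_H2 u)

instance (u : Linf) : Nontrivial (KuP u) := by
  refine Submodule.nontrivial_iff_ne_bot.2 ((Submodule.ne_bot_iff _).2 ?_)
  refine ⟨_, Hminus_le_KuP u em1_mem, ?_⟩
  simpa only [coe_fourierBasis] using (fourierBasis (T := 2 * Real.pi)).orthonormal.ne_zero (-1)

theorem minMod_Dphi_eq_sqrt_one_sub_norm_B_general (u φ : Linf)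
    (hmod : ∀ᵐ z ∂μT, ‖φ z‖ = 1) :
    minMod (Dop u φ) = Real.sqrt (1 - ‖Bop u (conjL φ)‖ ^ 2) := by
  rw [← ContinuousLinearMap.adjoint.norm_map (Bop u (conjL φ))]
  exact minMod_eq_sqrt_one_sub_norm_sq _ _ (norm_sq_Dop_add_norm_sq_adjoint_Bop_conjL hmod)

/-- For unimodular `φ`, `m(D_φ) = √(1 - ‖B_{φ̄}‖²)`. -/
theorem minMod_Dphi_eq_sqrt_one_sub_norm_B (u φ : Linf) (hu : IsInnerFn u)
    (hnc : Nonconst u) (hmod : ∀ᵐ z ∂μT, ‖φ z‖ = 1) :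
    minMod (Dop u φ) = Real.sqrt (1 - ‖Bop u (conjL φ)‖ ^ 2) :=
  minMod_Dphi_eq_sqrt_one_sub_norm_B_general u φ hmod

end DTTO
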